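/- Let P be a finite Γ-colored poset satisfying EC, NA, AC, and ICE2, and let b, c ∈ Γ be distinct colors. For m ≥ 1 and integers p, q, r ≥ 0 with r ≥ p, the operator identity ⟨c^q⟩∘⟨b^p⟩∘⟨c^r⟩ = ∑_{k=0}^{min(p,q)} C(q+r-p, q-k) · ⟨b^{p-k}⟩∘⟨c^{q+r}⟩∘⟨b^k⟩ holds on m-tuples of order ideals of P. -/

import Mathlib

/-!
Write `X_a = ∑ j, X_{a,j}`, where `X_{a,j}` adds an element of color `a` to the `j`-th ideal only.
On tuples of ideals the `X_{a,j}` with different `j` commute, and EC together with ICE2 gives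
`X_{a,j}² = 0` and `X_{a,j} X_{a',j} X_{a,j} = 0` for `a ≠ a'`: two elements of color `a` added to
one ideal in such a word would be consecutive of their color with at most one element between
them, while ICE2 demands two. Hence `Z = [X_b, X_c] = ∑ j, [X_{b,j}, X_{c,j}]` commutes with `X_b`
and `X_c`, and in this Heisenberg algebra normal ordering gives
`⟨c^q⟩⟨b^p⟩ = ∑ t, (-1)^t ⟨b^(p-t)⟩⟨c^(q-t)⟩⟨Z^t⟩`. Expanding both sides of the identity in the
words `⟨b^(p-t)⟩⟨c^(q+r-t)⟩⟨Z^t⟩`, the coefficients agree by Vandermonde's identity.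
-/

open scoped Classical

/-- The set of ideals obtainable from the ideal `I` by adding a minimal element of the
complementary filter of color `a`. -/
noncomputable def addSet {P Γ : Type} [Fintype P] [PartialOrder P] [DecidableEq P]
    (κ : P → Γ) (a : Γ) (I : Finset P) : Finset (Finset P) :=
  (Finset.univ.filter (fun x : P => κ x = a ∧ x ∉ I ∧
    IsLowerSet ((insert x I : Finset P) : Set P))).image (fun x => insert x I)

/-- The raising operator `X_a` applied to a single `m`-tuple of ideals: add a minimal
element of color `a` of the complementary filter to one coordinate, summed over all
coordinates and all such elements. -/
noncomputable def XaT {P Γ : Type} [Fintype P] [PartialOrder P] [DecidableEq P]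
    (κ : P → Γ) {m : ℕ} (a : Γ) (T : Fin m → Finset P) : (Fin m → Finset P) →₀ ℚ :=
  ∑ j : Fin m,
    ((addSet κ a (T j)).val.map (fun J => Finsupp.single (Function.update T j J) (1 : ℚ))).sum

/-- The linear extension of `X_a` to formal `ℚ`-linear combinations of `m`-tuples. -/
noncomputable def XvT {P Γ : Type} [Fintype P] [PartialOrder P] [DecidableEq P]
    (κ : P → Γ) {m : ℕ} (a : Γ) (v : (Fin m → Finset P) →₀ ℚ) : (Fin m → Finset P) →₀ ℚ :=
  v.sum (fun T c => c • XaT κ a T)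

/-- The divided power operator `⟨a^k⟩ = X_a^k / k!` on `m`-tuples of ideals. -/
noncomputable def opPowT {P Γ : Type} [Fintype P] [PartialOrder P] [DecidableEq P]
    (κ : P → Γ) {m : ℕ} (a : Γ) (k : ℕ) (v : (Fin m → Finset P) →₀ ℚ) :
    (Fin m → Finset P) →₀ ℚ :=
  ((k.factorial : ℚ)⁻¹) • (XvT κ a)^[k] v

open Finset
open scoped Nat

section Heisenberg

variable {R : Type*} [Ring R] {B C Z : R}

-- At `n = 0` the truncated exponent `n - 1` is harmless: its coefficient is `0`.
theorem mul_pow_eq_pow_mul_sub (hZ : B * C - C * B = Z) (hBZ : Commute B Z) (n : ℕ) :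
    C * B ^ n = B ^ n * C - n • (B ^ (n - 1) * Z) := by
  induction n with
  | zero => simp
  | succ n ih =>
    have hCB : C * B = B * C - Z := by rw [← hZ]; abel
    have hshift : n • (B ^ (n - 1) * Z * B) = n • (B ^ n * Z) := by
      rcases n with _ | n
      · simp
      · rw [mul_assoc, ← hBZ.eq, ← mul_assoc, ← pow_succ, Nat.add_sub_cancel]
    calc C * B ^ (n + 1) = (C * B ^ n) * B := by rw [pow_succ, mul_assoc]
      _ = B ^ (n + 1) * C - (B ^ n * Z + n • (B ^ n * Z)) := by
        rw [ih, sub_mul, smul_mul_assoc, hshift, mul_assoc, hCB, mul_sub, ← mul_assoc,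
          ← pow_succ, sub_sub]
      _ = _ := by rw [Nat.add_sub_cancel, succ_nsmul']

theorem pow_mul_pow_eq_sum (hZ : B * C - C * B = Z) (hBZ : Commute B Z) (hCZ : Commute C Z)
    (p q : ℕ) :
    C ^ q * B ^ p = ∑ t ∈ range (q + 1),
      ((-1) ^ t * q.choose t * p.descFactorial t : ℤ) • (B ^ (p - t) * C ^ (q - t) * Z ^ t) := by
  induction q with
  | zero => simp
  | succ q ih =>
    set u : ℕ → R := fun t => B ^ (p - t) * C ^ (q + 1 - t) * Z ^ t with hu
    have hstep : ∀ t ∈ range (q + 1), C * (B ^ (p - t) * C ^ (q - t) * Z ^ t) =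
        u t - ((p - t : ℕ) : ℤ) • u (t + 1) := by
      intro t ht
      have htq : q + 1 - t = q - t + 1 := by grind
      rw [← mul_assoc, ← mul_assoc, mul_pow_eq_pow_mul_sub hZ hBZ]
      simp only [hu, htq, Nat.add_sub_add_right, Nat.sub_sub, pow_succ',
        sub_mul, smul_mul_assoc, mul_assoc, ← (hCZ.pow_left (q - t)).eq, natCast_zsmul]
    have hpad : ∑ t ∈ range (q + 1), ((-1) ^ t * q.choose t * p.descFactorial t : ℤ) • u t =
        ∑ t ∈ range (q + 2), ((-1) ^ t * q.choose t * p.descFactorial t : ℤ) • u t := by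
      simp [sum_range_succ _ (q + 1)]
    calc C ^ (q + 1) * B ^ p = C * (C ^ q * B ^ p) := by rw [pow_succ', mul_assoc]
      _ = ∑ t ∈ range (q + 1), ((-1) ^ t * q.choose t * p.descFactorial t : ℤ) • u t -
          ∑ t ∈ range (q + 1), ((-1) ^ t * q.choose t * p.descFactorial t * (p - t : ℕ) : ℤ) •
            u (t + 1) := by
        rw [ih, mul_sum, ← sum_sub_distrib]
        refine sum_congr rfl fun t ht => ?_
        rw [mul_smul_comm, hstep t ht, smul_sub, smul_smul]
      _ = _ := by
        rw [hpad, sum_range_succ', sum_range_succ' _ (q + 1),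
          add_sub_right_comm, ← sum_sub_distrib]
        congr 1
        · refine sum_congr rfl fun t _ => ?_
          rw [← sub_smul]
          congr 1
          rw [Nat.choose_succ_succ', Nat.descFactorial_succ]
          push_cast
          ring
        · simp [hu]

end Heisenberg

section DividedPow

variable {R : Type*} [Ring R] [Algebra ℚ R]

noncomputable def dividedPow (x : R) (n : ℕ) : R := ((n ! : ℚ)⁻¹) • x ^ n

theorem dividedPow_mul_dividedPow (x : R) (a b : ℕ) :
    dividedPow x a * dividedPow x b = ((a + b).choose a : ℚ) • dividedPow x (a + b) := by
  rw [dividedPow, dividedPow, dividedPow, smul_mul_smul_comm, ← pow_add, smul_smul]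
  congr 1
  rw [Nat.cast_choose ℚ (Nat.le_add_right a b), Nat.add_sub_cancel_left]
  field_simp

theorem Commute.dividedPow {x y : R} (h : Commute x y) (a b : ℕ) :
    Commute (dividedPow x a) (dividedPow y b) :=
  ((h.pow_pow a b).smul_left _).smul_right _

variable {B C Z : R}

theorem dividedPow_mul_dividedPow_eq_sum (hZ : B * C - C * B = Z) (hBZ : Commute B Z)
    (hCZ : Commute C Z) (p q : ℕ) :
    dividedPow C q * dividedPow B p = ∑ t ∈ range (min p q + 1),
      (-1 : ℚ) ^ t • (dividedPow B (p - t) * dividedPow C (q - t) * dividedPow Z t) := by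
  rw [dividedPow, dividedPow, smul_mul_smul_comm, pow_mul_pow_eq_sum hZ hBZ hCZ, smul_sum,
    ← sum_subset (range_subset_range.mpr (by omega : min p q + 1 ≤ q + 1))]
  · refine sum_congr rfl fun t ht => ?_
    have htp : t ≤ p := by grind
    have htq : t ≤ q := by grind
    simp only [dividedPow, smul_mul_smul_comm, smul_smul, ← Int.cast_smul_eq_zsmul ℚ]
    have hd : (p.descFactorial t : ℚ) ≠ 0 := by
      exact_mod_cast mt Nat.descFactorial_eq_zero_iff_lt.mp (by omega)
    congr 1
    push_cast
    rw [Nat.cast_choose ℚ htq, ← Nat.factorial_mul_descFactorial htp]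
    push_cast
    field_simp
  · intro t ht hmin
    have hpt : p < t := by grind
    rw [Nat.descFactorial_eq_zero_iff_lt.mpr hpt]
    simp

theorem sum_choose_mul_choose_eq {p q r t : ℕ} (htp : t ≤ p) (htq : t ≤ q) (hp : p ≤ q + r) :
    ∑ k ∈ Ico t (min p q + 1), (q + r - p).choose (q - k) * (p - t).choose (k - t) =
      (q + r - t).choose (q - t) := by
  have hsplit : q + r - t = (q + r - p) + (p - t) := by omega
  rw [hsplit, Nat.add_choose_eq, Nat.sum_antidiagonal_eq_sum_range_succ_mk,
    sum_subset (Ico_subset_Ico_right (by omega : min p q + 1 ≤ q + 1))]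
  · refine sum_nbij' (fun k => q - k) (fun i => q - i) ?_ ?_ ?_ ?_ ?_ <;>
      intro k hk <;> simp only [mem_Ico, mem_range] at hk ⊢
    · omega
    · omega
    · omega
    · omega
    · rw [show q - t - (q - k) = k - t by omega]
  · intro k hk hmin
    simp only [mem_Ico] at hk hmin
    rw [Nat.choose_eq_zero_of_lt (by omega : p - t < k - t), mul_zero]

theorem dividedPow_mul_dividedPow_mul_dividedPow (hZ : B * C - C * B = Z) (hBZ : Commute B Z)
    (hCZ : Commute C Z) {p q r : ℕ} (hp : p ≤ q + r) :
    dividedPow C q * dividedPow B p * dividedPow C r = ∑ k ∈ range (min p q + 1),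
      ((q + r - p).choose (q - k) : ℚ) •
        (dividedPow B (p - k) * dividedPow C (q + r) * dividedPow B k) := by
  set w : ℕ → R := fun t => dividedPow B (p - t) * dividedPow C (q + r - t) * dividedPow Z t
    with hw
  have hleft : dividedPow C q * dividedPow B p * dividedPow C r = ∑ t ∈ range (min p q + 1),
      ((-1) ^ t * ((q + r - t).choose (q - t) : ℚ)) • w t := by
    rw [dividedPow_mul_dividedPow_eq_sum hZ hBZ hCZ, sum_mul]
    refine sum_congr rfl fun t ht => ?_
    have htq : q - t + r = q + r - t := by grind
    rw [smul_mul_assoc, mul_assoc, (hCZ.symm.dividedPow t r).eq, ← mul_assoc,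
      mul_assoc _ _ (dividedPow C r), dividedPow_mul_dividedPow, htq, mul_smul]
    simp only [hw, smul_mul_assoc, mul_smul_comm]
  have hright : ∀ k ∈ range (min p q + 1),
      dividedPow B (p - k) * dividedPow C (q + r) * dividedPow B k = ∑ t ∈ range (k + 1), ((-1) ^ t * ((p - t).choose (k - t) : ℚ)) • w t := by
    intro k hk
    have hkq : min k (q + r) = k := by grind
    rw [mul_assoc, dividedPow_mul_dividedPow_eq_sum hZ hBZ hCZ, hkq, mul_sum]
    refine sum_congr rfl fun t ht => ?_
    have hpt : p - k + (k - t) = p - t := by grind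
    rw [mul_smul_comm, ← mul_assoc, ← mul_assoc, dividedPow_mul_dividedPow, Nat.choose_symm_add,
      hpt, mul_smul]
    simp only [hw, smul_mul_assoc]
  calc dividedPow C q * dividedPow B p * dividedPow C r
      = ∑ t ∈ Ico 0 (min p q + 1), ∑ k ∈ Ico t (min p q + 1),
          (((q + r - p).choose (q - k) : ℚ) * ((-1) ^ t * ((p - t).choose (k - t) : ℚ))) • w t := by
        rw [hleft, range_eq_Ico]
        refine sum_congr rfl fun t ht => ?_
        rw [mem_Ico] at ht
        rw [← sum_smul, ← sum_choose_mul_choose_eq (by omega : t ≤ p) (by omega : t ≤ q) hp,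
          Nat.cast_sum, mul_sum]
        push_cast
        refine congrArg (· • w t) (sum_congr rfl fun k _ => by ring)
    _ = ∑ k ∈ Ico 0 (min p q + 1), ∑ t ∈ Ico 0 (k + 1),
          (((q + r - p).choose (q - k) : ℚ) * ((-1) ^ t * ((p - t).choose (k - t) : ℚ))) • w t :=
        sum_Ico_Ico_comm _ _ _
    _ = _ := by
        rw [← range_eq_Ico]
        refine sum_congr rfl fun k hk => ?_
        rw [hright k hk, smul_sum, ← range_eq_Ico]
        simp only [mul_smul]

end DividedPow

section Commutator

variable {R : Type*} [Ring R] {ι : Type*} [Fintype ι] {β γ : ι → R}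

theorem sum_mul_sum_sub_sum_mul_sum (hβγ : Pairwise fun i j => Commute (β i) (γ j)) :
    (∑ i, β i) * (∑ i, γ i) - (∑ i, γ i) * (∑ i, β i) = ∑ i, (β i * γ i - γ i * β i) := by
  rw [sum_mul_sum, sum_mul_sum, sum_comm (f := fun i j => γ i * β j), ← sum_sub_distrib]
  refine sum_congr rfl fun i _ => ?_
  rw [← sum_sub_distrib, sum_eq_single i (fun j _ hji => by rw [(hβγ hji.symm).eq, sub_self])
    (by simp)]

theorem commute_sum_sum_mul_sum_sub (hββ : Pairwise fun i j => Commute (β i) (β j))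
    (hβγ : Pairwise fun i j => Commute (β i) (γ j)) (hβ : ∀ i, β i * β i = 0)
    (hβγβ : ∀ i, β i * γ i * β i = 0) :
    Commute (∑ i, β i) ((∑ i, β i) * (∑ i, γ i) - (∑ i, γ i) * (∑ i, β i)) := by
  rw [sum_mul_sum_sub_sum_mul_sum hβγ]
  refine Commute.sum_left _ _ _ fun i _ => Commute.sum_right _ _ _ fun j _ => ?_
  obtain rfl | hij := eq_or_ne i j
  · have hleft : β i * (β i * γ i - γ i * β i) = 0 := by
      rw [mul_sub, ← mul_assoc, ← mul_assoc, hβ, zero_mul, hβγβ, sub_zero]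
    have hright : (β i * γ i - γ i * β i) * β i = 0 := by
      rw [sub_mul, hβγβ, mul_assoc, hβ, mul_zero, sub_zero]
    exact hleft.trans hright.symm
  · exact ((hββ hij).mul_right (hβγ hij)).sub_right ((hβγ hij).mul_right (hββ hij))

theorem commute_sum_commutator (hββ : Pairwise fun i j => Commute (β i) (β j))
    (hγγ : Pairwise fun i j => Commute (γ i) (γ j)) (hβγ : Pairwise fun i j => Commute (β i) (γ j))
    (hβ : ∀ i, β i * β i = 0) (hγ : ∀ i, γ i * γ i = 0) (hβγβ : ∀ i, β i * γ i * β i = 0)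
    (hγβγ : ∀ i, γ i * β i * γ i = 0) :
    Commute (∑ i, β i) ((∑ i, β i) * (∑ i, γ i) - (∑ i, γ i) * (∑ i, β i)) ∧
      Commute (∑ i, γ i) ((∑ i, β i) * (∑ i, γ i) - (∑ i, γ i) * (∑ i, β i)) := by
  refine ⟨commute_sum_sum_mul_sum_sub hββ hβγ hβ hβγβ, ?_⟩
  rw [← neg_sub]
  exact (commute_sum_sum_mul_sum_sub hγγ (fun i j hij => (hβγ hij.symm).symm) hγ hγβγ).neg_right

end Commutator

section Supported

variable {R α M : Type*} [Semiring R] [AddCommMonoid M] [Module R M] {s : Set α}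

theorem Finsupp.eqOn_supported_of_single {f g : (α →₀ R) →ₗ[R] M}
    (h : ∀ a ∈ s, f (Finsupp.single a 1) = g (Finsupp.single a 1)) :
    ∀ v ∈ Finsupp.supported R R s, f v = g v := by
  rw [Finsupp.supported_eq_span_single]
  exact fun v hv => LinearMap.eqOn_span (by rintro _ ⟨a, ha, rfl⟩; exact h a ha) hv

theorem Finsupp.mapsTo_supported_of_single {f : (α →₀ R) →ₗ[R] (α →₀ R)}
    (h : ∀ a ∈ s, f (Finsupp.single a 1) ∈ Finsupp.supported R R s) :
    ∀ v ∈ Finsupp.supported R R s, f v ∈ Finsupp.supported R R s := by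
  have hle : Finsupp.supported R R s ≤ (Finsupp.supported R R s).comap f := by
    conv_lhs => rw [Finsupp.supported_eq_span_single]
    exact Submodule.span_le.mpr (by rintro _ ⟨a, ha, rfl⟩; exact h a ha)
  exact fun v hv => hle hv

end Supported

theorem LinearMap.restrict_sum {R M ι : Type*} [Semiring R] [AddCommMonoid M] [Module R M]
    [Fintype ι] {N : Submodule R M} (f : ι → Module.End R M) (hf : ∀ i, ∀ x ∈ N, f i x ∈ N) :
    (∑ i, f i).restrict (fun x hx => by simpa using N.sum_mem fun i _ => hf i x hx) =
      ∑ i, (f i).restrict (hf i) := by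
  ext x
  simp [LinearMap.restrict_apply]

section ColoredPoset

variable {P Γ : Type} [PartialOrder P] {G : SimpleGraph Γ} {κ : P → Γ}

def EC (κ : P → Γ) : Prop := ∀ x y : P, κ x = κ y → x ≤ y ∨ y ≤ x

def ICE2 [Fintype P] (G : SimpleGraph Γ) (κ : P → Γ) : Prop :=
  ∀ x y : P, κ x = κ y → x < y →
    (∀ z : P, κ z = κ x → ¬ (x < z ∧ z < y)) →
    (Finset.univ.filter (fun z : P => x < z ∧ z < y ∧ G.Adj (κ z) (κ x))).card = 2

theorem ICE2.not_lt [Fintype P] (hICE2 : ICE2 G κ) {x y : P} (hxy : κ x = κ y)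
    (hsub : {w | x < w ∧ w < y}.Subsingleton) (hcol : ∀ w, x < w → w < y → κ w ≠ κ x) :
    ¬ x < y := fun hlt => by
  have hcard := hICE2 x y hxy hlt fun w hw hxwy => hcol w hxwy.1 hxwy.2 hw
  have : (univ.filter fun w : P => x < w ∧ w < y ∧ G.Adj (κ w) (κ x)).card ≤ 1 :=
    card_le_one.mpr fun w hw v hv => by
      simp only [mem_filter, mem_univ, true_and] at hw hv
      exact hsub ⟨hw.1, hw.2.1⟩ ⟨hv.1, hv.2.1⟩
  omega

variable [DecidableEq P]

variable (κ) in
def IsAddable (a : Γ) (I : Finset P) (x : P) : Prop :=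
  κ x = a ∧ x ∉ I ∧ IsLowerSet (↑(insert x I) : Set P)

theorem EC.lt_of_isAddable (hEC : EC κ) {a : Γ} {J : Finset P} (hJ : IsLowerSet (J : Set P))
    {x y : P} (hxa : κ x = a) (hxJ : x ∈ J) (hy : IsAddable κ a J y) : x < y := by
  obtain ⟨hya, hyJ, -⟩ := hy
  refine (hEC x y (hxa.trans hya.symm)).elim (fun hle => hle.lt_of_ne ?_) fun hle => ?_
  · rintro rfl; exact hyJ hxJ
  · exact (hyJ (hJ hle hxJ)).elim

variable [Fintype P]

theorem mem_addSet {a : Γ} {I J : Finset P} :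
    J ∈ addSet κ a I ↔ ∃ x, IsAddable κ a I x ∧ insert x I = J := by
  simp [addSet, IsAddable]

theorem not_isAddable_insert (hEC : EC κ) (hICE2 : ICE2 G κ) {a : Γ} {I : Finset P}
    (hI : IsLowerSet (I : Set P)) {x y : P} (hx : IsAddable κ a I x) :
    ¬ IsAddable κ a (insert x I) y := fun hy => by
  have hxy := hEC.lt_of_isAddable hx.2.2 hx.1 (mem_insert_self x I) hy
  have hempty : ∀ w, x < w → w < y → False := fun w hxw hwy => by
    have hw := hy.2.2 hwy.le (mem_insert_self y _)
    simp only [coe_insert, Set.mem_insert_iff, mem_coe] at hw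
    rcases hw with rfl | rfl | hw
    · exact hwy.ne rfl
    · exact hxw.ne rfl
    · exact hx.2.1 (hI hxw.le hw)
  exact hICE2.not_lt (hx.1.trans hy.1.symm) (fun w hw => (hempty w hw.1 hw.2).elim)
    (fun w hxw hwy => (hempty w hxw hwy).elim) hxy

theorem not_isAddable_insert_insert (hEC : EC κ) (hICE2 : ICE2 G κ) {a a' : Γ} (ha : a ≠ a')
    {I : Finset P} (hI : IsLowerSet (I : Set P)) {x z y : P} (hx : IsAddable κ a I x)
    (hz : IsAddable κ a' (insert x I) z) : ¬ IsAddable κ a (insert z (insert x I)) y :=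
  fun hy => by
  have hxy := hEC.lt_of_isAddable hz.2.2 hx.1 (mem_insert_of_mem (mem_insert_self x I)) hy
  have hbetween : ∀ w, x < w → w < y → w = z := fun w hxw hwy => by
    have hw := hy.2.2 hwy.le (mem_insert_self y _)
    simp only [coe_insert, Set.mem_insert_iff, mem_coe] at hw
    rcases hw with rfl | rfl | rfl | hw
    · exact (hwy.ne rfl).elim
    · rfl
    · exact (hxw.ne rfl).elim
    · exact (hx.2.1 (hI hxw.le hw)).elim
  refine hICE2.not_lt (hx.1.trans hy.1.symm)
    (fun w hw v hv => (hbetween w hw.1 hw.2).trans (hbetween v hv.1 hv.2).symm)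
    (fun w hxw hwy => ?_) hxy
  rw [hbetween w hxw hwy, hz.1, hx.1]
  exact ha.symm

end ColoredPoset

section RaisingOperators

variable {P Γ : Type} [Fintype P] [PartialOrder P] [DecidableEq P] (κ : P → Γ) {m : ℕ}

noncomputable def raiseAt (a : Γ) (j : Fin m) : Module.End ℚ ((Fin m → Finset P) →₀ ℚ) :=
  Finsupp.linearCombination ℚ fun T =>
    ∑ J ∈ addSet κ a (T j), Finsupp.single (Function.update T j J) 1

theorem raiseAt_single (a : Γ) (j : Fin m) (T : Fin m → Finset P) :
    raiseAt κ a j (Finsupp.single T 1) =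
      ∑ J ∈ addSet κ a (T j), Finsupp.single (Function.update T j J) 1 := by
  simp [raiseAt]

theorem opPowT_eq_dividedPow (a : Γ) (k : ℕ) (v : (Fin m → Finset P) →₀ ℚ) :
    opPowT κ a k v = dividedPow (∑ j, raiseAt κ a j) k v := by
  have hXaT : ∀ T : Fin m → Finset P, XaT κ a T =
      ∑ j, ∑ J ∈ addSet κ a (T j), Finsupp.single (Function.update T j J) 1 := fun _ => rfl
  have hX : XvT (m := m) κ a = ⇑(∑ j, raiseAt κ a j) := funext fun v => by
    simp only [XvT, hXaT, LinearMap.sum_apply, raiseAt, Finsupp.linearCombination_apply,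
      Finsupp.sum, Finset.smul_sum]
    exact sum_comm
  rw [opPowT, dividedPow, LinearMap.smul_apply, Module.End.pow_apply, hX]

theorem raiseAt_commute (a a' : Γ) {i j : Fin m} (hij : i ≠ j) :
    Commute (raiseAt κ a i) (raiseAt κ a' j) := by
  refine Finsupp.lhom_ext' fun T => LinearMap.ext_ring ?_
  simp only [LinearMap.comp_apply, Finsupp.lsingle_apply, Module.End.mul_apply, raiseAt_single,
    map_sum, Function.update_of_ne hij, Function.update_of_ne hij.symm]
  rw [sum_comm]
  exact sum_congr rfl fun _ _ => sum_congr rfl fun _ _ => by rw [Function.update_comm hij]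

end RaisingOperators

section LowerTuples

variable {P Γ : Type} [Fintype P] [PartialOrder P] [DecidableEq P] {G : SimpleGraph Γ}
  (κ : P → Γ) {m : ℕ}

/- The relations `X_{a,j}² = 0` and `X_{a,j} X_{a',j} X_{a,j} = 0` hold only on tuples of ideals,
so the ring computation is done in the endomorphisms of their span. -/
def lowerTuples (P : Type) [PartialOrder P] (m : ℕ) : Set (Fin m → Finset P) :=
  {T | ∀ j, IsLowerSet (T j : Set P)}

theorem raiseAt_mapsTo (a : Γ) (j : Fin m) :
    ∀ v ∈ Finsupp.supported ℚ ℚ (lowerTuples P m),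
      raiseAt κ a j v ∈ Finsupp.supported ℚ ℚ (lowerTuples P m) :=
  Finsupp.mapsTo_supported_of_single fun T hT => by
    rw [raiseAt_single]
    refine Submodule.sum_mem _ fun J hJ => Finsupp.single_mem_supported ℚ 1 ?_
    obtain ⟨x, hx, rfl⟩ := mem_addSet.mp hJ
    exact (Function.forall_update_iff T fun _ I => IsLowerSet (I : Set P)).mpr
      ⟨hx.2.2, fun i _ => hT i⟩

theorem raiseAt_raiseAt_single (hEC : EC κ) (hICE2 : ICE2 G κ) (a : Γ) (j : Fin m)
    {T : Fin m → Finset P} (hT : T ∈ lowerTuples P m) :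
    raiseAt κ a j (raiseAt κ a j (Finsupp.single T 1)) = 0 := by
  rw [raiseAt_single, map_sum]
  refine sum_eq_zero fun J hJ => ?_
  obtain ⟨x, hx, rfl⟩ := mem_addSet.mp hJ
  rw [raiseAt_single, Function.update_self]
  refine sum_eq_zero fun J' hJ' => ?_
  obtain ⟨y, hy, -⟩ := mem_addSet.mp hJ'
  exact (not_isAddable_insert hEC hICE2 (hT j) hx hy).elim

theorem raiseAt_raiseAt_raiseAt_single (hEC : EC κ) (hICE2 : ICE2 G κ) {a a' : Γ}
    (ha : a ≠ a') (j : Fin m) {T : Fin m → Finset P} (hT : T ∈ lowerTuples P m) :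
    raiseAt κ a j (raiseAt κ a' j (raiseAt κ a j (Finsupp.single T 1))) = 0 := by
  rw [raiseAt_single, map_sum, map_sum]
  refine sum_eq_zero fun J hJ => ?_
  obtain ⟨x, hx, rfl⟩ := mem_addSet.mp hJ
  rw [raiseAt_single, Function.update_self, map_sum]
  refine sum_eq_zero fun J' hJ' => ?_
  obtain ⟨z, hz, rfl⟩ := mem_addSet.mp hJ'
  rw [Function.update_idem, raiseAt_single, Function.update_self]
  refine sum_eq_zero fun J'' hJ'' => ?_
  obtain ⟨y, hy, -⟩ := mem_addSet.mp hJ''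
  exact (not_isAddable_insert_insert hEC hICE2 ha (hT j) hx hz hy).elim

noncomputable def lowerRaiseAt (a : Γ) (j : Fin m) :
    Module.End ℚ (Finsupp.supported ℚ ℚ (lowerTuples P m)) :=
  (raiseAt κ a j).restrict (raiseAt_mapsTo κ a j)

theorem lowerRaiseAt_commute (a a' : Γ) {i j : Fin m} (hij : i ≠ j) :
    Commute (lowerRaiseAt κ a i) (lowerRaiseAt κ a' j) :=
  LinearMap.restrict_commute (raiseAt_commute κ a a' hij) _ _

theorem lowerRaiseAt_mul_self (hEC : EC κ) (hICE2 : ICE2 G κ) (a : Γ) (j : Fin m) :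
    lowerRaiseAt κ a j * lowerRaiseAt κ a j = 0 :=
  LinearMap.ext fun v => Subtype.ext <|
    Finsupp.eqOn_supported_of_single (f := raiseAt κ a j * raiseAt κ a j) (g := 0)
      (fun _ hT => raiseAt_raiseAt_single κ hEC hICE2 a j hT) v v.2

theorem lowerRaiseAt_mul_mul_self (hEC : EC κ) (hICE2 : ICE2 G κ) {a a' : Γ} (ha : a ≠ a')
    (j : Fin m) : lowerRaiseAt κ a j * lowerRaiseAt κ a' j * lowerRaiseAt κ a j = 0 :=
  LinearMap.ext fun v => Subtype.ext <|
    Finsupp.eqOn_supported_of_single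
      (f := raiseAt κ a j * raiseAt κ a' j * raiseAt κ a j) (g := 0)
      (fun _ hT => raiseAt_raiseAt_raiseAt_single κ hEC hICE2 ha j hT) v v.2

theorem coe_dividedPow_sum_lowerRaiseAt_apply (a : Γ) (k : ℕ)
    (v : Finsupp.supported ℚ ℚ (lowerTuples P m)) :
    (dividedPow (∑ j, lowerRaiseAt κ a j) k v : (Fin m → Finset P) →₀ ℚ) = opPowT κ a k v := by
  simp only [lowerRaiseAt]
  rw [opPowT_eq_dividedPow, ← LinearMap.restrict_sum, dividedPow, dividedPow,
    Module.End.pow_restrict]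
  rfl

end LowerTuples

theorem stmt17_general (P Γ : Type) [Fintype P] [PartialOrder P] [DecidableEq P]
    (G : SimpleGraph Γ) (κ : P → Γ)
    (hEC : ∀ x y : P, κ x = κ y → x ≤ y ∨ y ≤ x)
    (hICE2 : ∀ x y : P, κ x = κ y → x < y →
      (∀ z : P, κ z = κ x → ¬ (x < z ∧ z < y)) →
      (Finset.univ.filter (fun z : P => x < z ∧ z < y ∧ G.Adj (κ z) (κ x))).card = 2)
    (b c : Γ) (hbc : b ≠ c) (m : ℕ) (p q r : ℕ) (hrp : p ≤ r) :
    ∀ T : Fin m → Finset P, (∀ j, IsLowerSet (↑(T j) : Set P)) →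
      opPowT κ c q (opPowT κ b p (opPowT κ c r (Finsupp.single T 1))) =
      ∑ k ∈ Finset.range (min p q + 1), ((q + r - p).choose (q - k) : ℚ) •
        opPowT κ b (p - k) (opPowT κ c (q + r) (opPowT κ b k (Finsupp.single T 1))) := by
  intro T hT
  obtain ⟨hB, hC⟩ := commute_sum_commutator (β := lowerRaiseAt κ b (m := m))
    (γ := lowerRaiseAt κ c) (fun _ _ h => lowerRaiseAt_commute κ b b h)
    (fun _ _ h => lowerRaiseAt_commute κ c c h) (fun _ _ h => lowerRaiseAt_commute κ b c h)
    (lowerRaiseAt_mul_self κ hEC hICE2 b) (lowerRaiseAt_mul_self κ hEC hICE2 c)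
    (lowerRaiseAt_mul_mul_self κ hEC hICE2 hbc) (lowerRaiseAt_mul_mul_self κ hEC hICE2 hbc.symm)
  let v : Finsupp.supported ℚ ℚ (lowerTuples P m) :=
    ⟨Finsupp.single T 1, Finsupp.single_mem_supported ℚ 1 hT⟩
  have key := congrArg (fun F => (F v : (Fin m → Finset P) →₀ ℚ))
    (dividedPow_mul_dividedPow_mul_dividedPow rfl hB hC (by omega : p ≤ q + r))
  simpa [coe_dividedPow_sum_lowerRaiseAt_apply] using key

/-- Proposition 5.6: for a finite `Γ`-colored poset satisfying EC, NA, AC, and ICE2,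
distinct colors `b, c`, `m ≥ 1`, and `p, q, r ≥ 0` with `r ≥ p`, the operator identity
`⟨c^q⟩∘⟨b^p⟩∘⟨c^r⟩ = ∑_{k=0}^{min(p,q)} C(q+r-p, q-k) • ⟨b^{p-k}⟩∘⟨c^{q+r}⟩∘⟨b^k⟩`
holds on `m`-tuples of order ideals of `P`. -/
theorem stmt17 (P Γ : Type) [Fintype P] [PartialOrder P] [DecidableEq P] [Nonempty P]
    (G : SimpleGraph Γ) (κ : P → Γ) (hsurj : Function.Surjective κ)
    (hEC : ∀ x y : P, κ x = κ y → x ≤ y ∨ y ≤ x)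
    (hNA : ∀ x y : P, x ⋖ y → G.Adj (κ x) (κ y))
    (hAC : ∀ x y : P, G.Adj (κ x) (κ y) → x ≤ y ∨ y ≤ x)
    (hICE2 : ∀ x y : P, κ x = κ y → x < y →
      (∀ z : P, κ z = κ x → ¬ (x < z ∧ z < y)) →
      (Finset.univ.filter (fun z : P => x < z ∧ z < y ∧ G.Adj (κ z) (κ x))).card = 2)
    (b c : Γ) (hbc : b ≠ c) (m : ℕ) (hm : 1 ≤ m) (p q r : ℕ) (hrp : p ≤ r) :
    ∀ T : Fin m → Finset P, (∀ j, IsLowerSet (↑(T j) : Set P)) →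
      opPowT κ c q (opPowT κ b p (opPowT κ c r (Finsupp.single T 1))) =
      ∑ k ∈ Finset.range (min p q + 1), ((q + r - p).choose (q - k) : ℚ) •
        opPowT κ b (p - k) (opPowT κ c (q + r) (opPowT κ b k (Finsupp.single T 1))) :=
  stmt17_general P Γ G κ hEC hICE2 b c hbc m p q r hrp
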